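/- The map Z_𝒜 : ℋ¹ → 𝒜 is a homomorphism for the harmonic product: Z_𝒜(w * w') = Z_𝒜(w) · Z_𝒜(w') for all w, w' ∈ ℋ¹. -/

import Mathlib

open scoped BigOperators

/-- The product of `ℤ/pℤ` over all primes `p`. -/
abbrev PreA : Type := ∀ p : Nat.Primes, ZMod p

/-- The ideal of families that vanish for all but finitely many primes. -/
def nullIdeal : Ideal PreA where
  carrier := {f | {p | f p ≠ 0}.Finite}
  zero_mem' := by simp
  add_mem' := by
    intro f g hf hg
    refine (hf.union hg).subset fun p hp => ?_
    by_contra hc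
    simp only [Set.mem_union, Set.mem_setOf_eq, not_or, not_not] at hc
    exact hp (by simp [Set.mem_setOf_eq, hc.1, hc.2])
  smul_mem' := by
    intro c f hf
    refine hf.subset fun p hp => ?_
    simp only [Set.mem_setOf_eq] at hp ⊢
    intro h0
    exact hp (by simp [h0])

/-- The ring `𝒜 = (∏_p ℤ/pℤ)/(⊕_p ℤ/pℤ)`. -/
abbrev A : Type := PreA ⧸ nullIdeal

/-- `zetaSum p ks b` is `∑_{b > m₁ > ⋯ > m_n ≥ 1} ∏ mᵢ^{-kᵢ}` in `ℤ/pℤ`. -/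
def zetaSum (p : ℕ) : List ℕ → ℕ → ZMod p
  | [], _ => 1
  | k :: ks, b => ∑ m ∈ Finset.Ico 1 b, ((m : ZMod p)⁻¹) ^ k * zetaSum p ks m

/-- `zetaStarSum p ks b` is `∑_{b > m₁ ≥ ⋯ ≥ m_n ≥ 1} ∏ mᵢ^{-kᵢ}` in `ℤ/pℤ`. -/
def zetaStarSum (p : ℕ) : List ℕ → ℕ → ZMod p
  | [], _ => 1
  | k :: ks, b => ∑ m ∈ Finset.Ico 1 b, ((m : ZMod p)⁻¹) ^ k * zetaStarSum p ks (m + 1)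

/-- The finite multiple zeta value `ζ_𝒜(k₁,…,k_n)`. -/
def zetaA (ks : List ℕ) : A :=
  Ideal.Quotient.mk nullIdeal (fun p => zetaSum p ks p)

/-- The finite multiple zeta-star value `ζ⋆_𝒜(k₁,…,k_n)`. -/
def zetaStarA (ks : List ℕ) : A :=
  Ideal.Quotient.mk nullIdeal (fun p => zetaStarSum p ks p)

/-- `ℋ¹ = ℚ⟨z₁,z₂,…⟩`, the noncommutative polynomial algebra on variables `z_k`, `k ≥ 1`. -/
abbrev H1 : Type := MonoidAlgebra ℚ (FreeMonoid ℕ+)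

/-- The monomial (word) `z_{k₁} ⋯ z_{k_n}` in `ℋ¹`. -/
noncomputable def word (w : List ℕ+) : H1 :=
  MonoidAlgebra.of ℚ (FreeMonoid ℕ+) (FreeMonoid.ofList w)

/-- Shuffle product on words (with values in `ℋ¹`). -/
noncomputable def shuffleW : List ℕ+ → List ℕ+ → H1
  | [], w => word w
  | v, [] => word v
  | k :: v, l :: w => word [k] * shuffleW v (l :: w) + word [l] * shuffleW (k :: v) w
  termination_by v w => v.length + w.length
  decreasing_by all_goals first | (simp; omega) | simp | omega

/-- The shuffle product `ш` on `ℋ¹`, as the bilinear extension of `shuffleW`. -/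
noncomputable def shuffle (x y : H1) : H1 :=
  Finsupp.sum x.coeff fun v c => Finsupp.sum y.coeff fun w c' =>
    (c * c') • shuffleW (FreeMonoid.toList v) (FreeMonoid.toList w)

/-- Harmonic product on words (with values in `ℋ¹`). -/
noncomputable def harmW : List ℕ+ → List ℕ+ → H1
  | [], w => word w
  | v, [] => word v
  | k :: v, l :: w =>
      word [k] * harmW v (l :: w) + word [l] * harmW (k :: v) w
        + word [k + l] * harmW v w
  termination_by v w => v.length + w.length
  decreasing_by all_goals first | (simp; omega) | simp | omega

/-- The harmonic product `*` on `ℋ¹`, as the bilinear extension of `harmW`. -/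
noncomputable def harm (x y : H1) : H1 :=
  Finsupp.sum x.coeff fun v c => Finsupp.sum y.coeff fun w c' =>
    (c * c') • harmW (FreeMonoid.toList v) (FreeMonoid.toList w)

/-- Star-harmonic product on words (with values in `ℋ¹`). -/
noncomputable def harmStarW : List ℕ+ → List ℕ+ → H1
  | [], w => word w
  | v, [] => word v
  | k :: v, l :: w =>
      word [k] * harmStarW v (l :: w) + word [l] * harmStarW (k :: v) w
        - word [k + l] * harmStarW v w
  termination_by v w => v.length + w.length
  decreasing_by all_goals first | (simp; omega) | simp | omega

/-- The product `∗̄` on `ℋ¹`, as the bilinear extension of `harmStarW`. -/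
noncomputable def harmStar (x y : H1) : H1 :=
  Finsupp.sum x.coeff fun v c => Finsupp.sum y.coeff fun w c' =>
    (c * c') • harmStarW (FreeMonoid.toList v) (FreeMonoid.toList w)

/-- The image of a rational number in `𝒜`. -/
def ratA (q : ℚ) : A :=
  Ideal.Quotient.mk nullIdeal (fun p => (q.num : ZMod p) * ((q.den : ZMod p))⁻¹)

/-- The `ℚ`-linear map `Z_𝒜 : ℋ¹ → 𝒜` sending `z_{k₁} ⋯ z_{k_n}` to `ζ_𝒜(k₁,…,k_n)`. -/
noncomputable def ZA (x : H1) : A :=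
  Finsupp.sum x.coeff fun w c => ratA c * zetaA ((FreeMonoid.toList w).map (fun k => (k : ℕ)))

/-- The `ℚ`-linear map `Z̄_𝒜 : ℋ¹ → 𝒜` sending `z_{k₁} ⋯ z_{k_n}` to `ζ⋆_𝒜(k₁,…,k_n)`. -/
noncomputable def ZSA (x : H1) : A :=
  Finsupp.sum x.coeff fun w c => ratA c * zetaStarA ((FreeMonoid.toList w).map (fun k => (k : ℕ)))

/-- Sum of a list of positive integers (equal to the actual sum for nonempty lists). -/
def psum : List ℕ+ → ℕ+
  | [] => 1
  | k :: t => t.foldl (· + ·) k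

/-- The map `d` on words: `d(z_{k₁}⋯z_{k_n}) = ∑_{m} ∑_{0=i₀<⋯<i_m=n}
`z_{k_{i₀+1}+⋯+k_{i₁}} ⋯ z_{k_{i_{m-1}+1}+⋯+k_{i_m}}`. -/
noncomputable def dW (w : List ℕ+) : H1 :=
  ∑ c : Composition w.length, word ((w.splitWrtComposition c).map psum)

/-- `z_a` for a tuple `a = (a₁,…,a_m; b₁,…,b_m; c₁,…,c_n) ∈ I_{m,n}`:
`∑_{σ,τ ∈ S_m} z_{a_{σ(1)}} z_{b_{τ(1)}} ⋯ z_{a_{σ(m)}} z_{b_{τ(m)}} ш z_{c₁} ш ⋯ ш z_{c_n}`. -/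
noncomputable def zTuple {m n : ℕ} (a b : Fin m → ℕ+) (c : Fin n → ℕ+) : H1 :=
  ∑ σ : Equiv.Perm (Fin m), ∑ τ : Equiv.Perm (Fin m),
    (List.ofFn c).foldl (fun w k => shuffle w (word [k]))
      (word ((List.ofFn (fun i => [a (σ i), b (τ i)])).flatten))

/-- The statement `P_{m,n}`: `Z_𝒜(z_a) = Z̄_𝒜(z_a) = 0` for all `a ∈ I_{m,n}`. -/
def Pmn (m n : ℕ) : Prop :=
  ∀ (a b : Fin m → ℕ+) (c : Fin n → ℕ+),
    (∀ i, Odd (a i : ℕ)) → (∀ i, Odd (b i : ℕ)) → (∀ j, Even (c j : ℕ)) →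
    ZA (zTuple a b c) = 0 ∧ ZSA (zTuple a b c) = 0

/-- The list `{c}^{n₀}, a, {c}^{n₁}, b, {c}^{n₂}, …, a, {c}^{n_{2m-1}}, b, {c}^{n_{2m}}`. -/
def bbList (a b c : ℕ) (m : ℕ) (f : Fin (2 * m + 1) → ℕ) : List ℕ :=
  (List.ofFn (fun j : Fin m =>
      List.replicate (f ⟨2 * j.val, by have := j.isLt; omega⟩) c ++ [a]
        ++ List.replicate (f ⟨2 * j.val + 1, by have := j.isLt; omega⟩) c ++ [b])).flatten
    ++ List.replicate (f ⟨2 * m, by omega⟩) c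

/-!
For a fixed modulus `p` and bound `b`, the truncated sums `∑_{b > m₁ > ⋯ > m_n ≥ 1}` already satisfy
the harmonic product relation exactly in `ℤ/pℤ`: splitting a product `∑_{m<b} ∑_{n<b}` according to
`m > n`, `m < n`, `m = n` reproduces the three terms of the recursion defining `*`. As `ℤ/pℤ` is not
a `ℚ`-algebra, this is proved for the harmonic product with integer coefficients and transported
to `ℋ¹` along `ℤ → ℚ`. Rational coefficients enter `𝒜` through the ring map `ℚ → 𝒜`, which exists
because a nonzero integer is invertible modulo all but finitely many primes.
-/

instance (p : Nat.Primes) : Fact (p : ℕ).Prime := ⟨p.2⟩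

lemma nullIdeal_mk_eq_iff {f g : PreA} :
    Ideal.Quotient.mk nullIdeal f = Ideal.Quotient.mk nullIdeal g ↔ {p | f p ≠ g p}.Finite := by
  rw [Ideal.Quotient.mk_eq_mk_iff_sub_mem]
  show {p | (f - g) p ≠ 0}.Finite ↔ _
  simp only [Pi.sub_apply, sub_ne_zero]

lemma finite_setOf_natCast_eq_zero {d : ℕ} (hd : d ≠ 0) :
    {p : Nat.Primes | (d : ZMod p) = 0}.Finite :=
  ((Set.finite_Iic d).preimage Subtype.val_injective.injOn).subset fun _ hp =>
    Nat.le_of_dvd (Nat.pos_of_ne_zero hd) ((ZMod.natCast_eq_zero_iff _ _).1 hp)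

lemma nullIdeal_mk_eq_of_natCast_ne_zero {f g : PreA} {d : ℕ} (hd : d ≠ 0)
    (h : ∀ p : Nat.Primes, (d : ZMod p) ≠ 0 → f p = g p) :
    Ideal.Quotient.mk nullIdeal f = Ideal.Quotient.mk nullIdeal g :=
  nullIdeal_mk_eq_iff.2 <| (finite_setOf_natCast_eq_zero hd).subset fun p hp =>
    by_contra fun h' => hp (h p h')

lemma isUnit_natCast_A {d : ℕ} (hd : d ≠ 0) : IsUnit (d : A) := by
  refine IsUnit.of_mul_eq_one (Ideal.Quotient.mk nullIdeal fun p => (d : ZMod p)⁻¹) ?_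
  rw [← map_natCast (Ideal.Quotient.mk nullIdeal), ← map_mul, ← map_one (Ideal.Quotient.mk nullIdeal)]
  exact nullIdeal_mk_eq_of_natCast_ne_zero hd fun p hp => mul_inv_cancel₀ hp

lemma isUnit_intCast_A {d : ℤ} (hd : d ≠ 0) : IsUnit (d : A) := by
  obtain ⟨n, rfl | rfl⟩ := Int.eq_nat_or_neg d
  · exact_mod_cast isUnit_natCast_A (by omega)
  · rw [Int.cast_neg, Int.cast_natCast]
    exact (isUnit_natCast_A (by omega)).neg

lemma ratA_mul_den (q : ℚ) : ratA q * q.den = q.num := by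
  rw [ratA, ← map_natCast (Ideal.Quotient.mk nullIdeal), ← map_intCast (Ideal.Quotient.mk nullIdeal),
    ← map_mul]
  exact nullIdeal_mk_eq_of_natCast_ne_zero q.den_nz fun p hp => by simp [hp]

noncomputable def ratHom : ℚ →+* A :=
  IsLocalization.lift (M := nonZeroDivisors ℤ) (g := Int.castRingHom A) fun d =>
    isUnit_intCast_A (nonZeroDivisors.ne_zero d.2)

lemma ratA_eq_ratHom : ratA = ratHom := by
  funext q
  refine (isUnit_natCast_A q.den_nz).mul_left_injective ?_
  simp only [ratA_mul_den]
  rw [← map_natCast ratHom, ← map_mul, Rat.mul_den_eq_num, map_intCast]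

lemma sum_Ico_mul_sum_Ico {R : Type*} [CommRing R] (a b : ℕ) (f g : ℕ → R) :
    (∑ m ∈ Finset.Ico a b, f m) * (∑ n ∈ Finset.Ico a b, g n)
      = ∑ m ∈ Finset.Ico a b, f m * (∑ n ∈ Finset.Ico a m, g n)
        + ∑ n ∈ Finset.Ico a b, (∑ m ∈ Finset.Ico a n, f m) * g n
        + ∑ m ∈ Finset.Ico a b, f m * g m := by
  induction b with
  | zero => simp
  | succ b ih =>
      rcases lt_or_ge b a with hb | hb
      · simp [Finset.Ico_eq_empty_of_le (show a ≥ b + 1 by omega)]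
      · simp only [Finset.sum_Ico_succ_top hb]
        linear_combination ih

abbrev H1Z : Type := MonoidAlgebra ℤ (FreeMonoid ℕ+)

noncomputable def wordZ (w : List ℕ+) : H1Z :=
  MonoidAlgebra.of ℤ (FreeMonoid ℕ+) (FreeMonoid.ofList w)

noncomputable def harmZ : List ℕ+ → List ℕ+ → H1Z
  | [], w => wordZ w
  | v, [] => wordZ v
  | k :: v, l :: w =>
      wordZ [k] * harmZ v (l :: w) + wordZ [l] * harmZ (k :: v) w + wordZ [k + l] * harmZ v w
  termination_by v w => v.length + w.length

noncomputable def zetaSumHom (p b : ℕ) : H1Z →+ ZMod p :=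
  MonoidAlgebra.liftNC (Int.castRingHom (ZMod p))
    fun w => zetaSum p ((FreeMonoid.toList w).map (↑)) b

lemma zetaSumHom_wordZ (p b : ℕ) (w : List ℕ+) :
    zetaSumHom p b (wordZ w) = zetaSum p (w.map (↑)) b := by
  simp [zetaSumHom, wordZ]

lemma zetaSumHom_wordZ_mul (p b : ℕ) (k : ℕ+) (x : H1Z) :
    zetaSumHom p b (wordZ [k] * x)
      = ∑ m ∈ Finset.Ico 1 b, ((m : ZMod p)⁻¹) ^ (k : ℕ) * zetaSumHom p m x := by
  induction x using MonoidAlgebra.induction_linear with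
  | zero => simp
  | add x y hx hy => simp only [mul_add, map_add, hx, hy, Finset.sum_add_distrib]
  | single w c =>
      simp only [zetaSumHom, wordZ, MonoidAlgebra.of_apply, MonoidAlgebra.single_mul_single,
        one_mul, MonoidAlgebra.liftNC_single, FreeMonoid.toList_mul]
      simp [zetaSum, Finset.mul_sum, mul_left_comm]

lemma zetaSumHom_harmZ (p : ℕ) (v w : List ℕ+) (b : ℕ) :
    zetaSumHom p b (harmZ v w) = zetaSum p (v.map (↑)) b * zetaSum p (w.map (↑)) b := by
  fun_induction harmZ v w generalizing b with
  | case1 w => simp [zetaSumHom_wordZ, zetaSum]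
  | case2 v _ => simp [zetaSumHom_wordZ, zetaSum]
  | case3 k v l w ih₁ ih₂ ih₃ =>
      simp only [map_add, zetaSumHom_wordZ_mul, ih₁, ih₂, ih₃, List.map_cons, zetaSum,
        sum_Ico_mul_sum_Ico, PNat.add_coe, pow_add]
      refine congrArg₂ (· + ·) (congrArg₂ (· + ·) ?_ ?_) ?_ <;>
        exact Finset.sum_congr rfl fun m _ => by ring

noncomputable abbrev castH1 : H1Z →+* H1 := MonoidAlgebra.mapRingHom _ (Int.castRingHom ℚ)

lemma castH1_wordZ (w : List ℕ+) : castH1 (wordZ w) = word w := by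
  simp [wordZ, word, MonoidAlgebra.mapRingHom_single]

lemma harmW_eq_castH1_harmZ (v w : List ℕ+) : harmW v w = castH1 (harmZ v w) := by
  fun_induction harmZ v w with
  | case1 w => rw [harmW, castH1_wordZ]
  | case2 v hv => rw [harmW.eq_2 v hv, castH1_wordZ]
  | case3 k v l w ih₁ ih₂ ih₃ =>
      simp only [harmW, map_add, map_mul, castH1_wordZ, ih₁, ih₂, ih₃]

-- In `ZA` the coercion `fun k => (k : ℕ)` is elaborated through the list monad, not as `PNat.val`.
lemma map_coe_eq_map_val (l : List ℕ+) : l.map (fun k => (k : ℕ)) = l.map PNat.val := by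
  simp only [List.map_id']
  exact List.flatMap_pure_eq_map PNat.val l

noncomputable def zetaWord (w : FreeMonoid ℕ+) : A := zetaA ((FreeMonoid.toList w).map (↑))

lemma ZA_apply (x : H1) : ZA x = x.coeff.sum fun w c => ratHom c * zetaWord w := by
  simp only [ZA, ratA_eq_ratHom, map_coe_eq_map_val, zetaWord]

lemma ZA_eq_liftNC : ZA = MonoidAlgebra.liftNC (ratHom : ℚ →+ A) zetaWord :=
  funext ZA_apply

lemma ZA_smul (c : ℚ) (x : H1) : ZA (c • x) = ratHom c * ZA x := by
  rw [ZA_eq_liftNC]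
  induction x using MonoidAlgebra.induction_linear with
  | zero => simp
  | add x y hx hy => simp only [smul_add, map_add, hx, hy, mul_add]
  | single w d => simp [MonoidAlgebra.smul_single, mul_assoc]

lemma ZA_castH1 (z : H1Z) :
    ZA (castH1 z) = Ideal.Quotient.mk nullIdeal fun p => zetaSumHom p p z := by
  rw [ZA_eq_liftNC]
  induction z using MonoidAlgebra.induction_linear with
  | zero => simp; rfl
  | add x y hx hy => simp only [map_add, hx, hy]; rfl
  | single w c =>
      simp only [MonoidAlgebra.mapRingHom_single, MonoidAlgebra.liftNC_single, zetaSumHom,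
        AddMonoidHom.coe_coe, eq_intCast, map_intCast, zetaWord, zetaA]
      rw [← map_intCast (Ideal.Quotient.mk nullIdeal), ← map_mul]
      rfl

lemma ZA_harmW (v w : List ℕ+) :
    ZA (harmW v w) = zetaA (v.map (↑)) * zetaA (w.map (↑)) := by
  rw [harmW_eq_castH1_harmZ, ZA_castH1, zetaA, zetaA, ← map_mul]
  congr 1
  funext p
  exact zetaSumHom_harmZ p v w p

theorem ZA_harm (w w' : H1) : ZA (harm w w') = ZA w * ZA w' := by
  rw [harm, ZA_eq_liftNC, map_finsuppSum]
  simp only [map_finsuppSum, ← ZA_eq_liftNC, ZA_smul, ZA_harmW, map_mul]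
  rw [ZA_apply w, ZA_apply w', Finsupp.sum_mul]
  refine Finsupp.sum_congr fun v _ => ?_
  rw [Finsupp.mul_sum]
  refine Finsupp.sum_congr fun u _ => ?_
  rw [zetaWord, zetaWord]
  ring
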